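/- Let n ≥ 1, let v₁,…,vₙ be nonzero vectors in ℂ², and let α ∈ ℂⁿ be an optimal coefficient vector with v_opt = Σⱼ αⱼ vⱼ. Then each optimal coefficient is the normalized inner product with the optimal resultant: for every j = 1,…,n, ⟨v_opt, vⱼ⟩ ≠ 0 and αⱼ = ⟨v_opt, vⱼ⟩ / |⟨v_opt, vⱼ⟩|; consequently the optimal resultant satisfies the fixed-point equation v_opt = Σⱼ (⟨v_opt, vⱼ⟩ / |⟨v_opt, vⱼ⟩|) vⱼ. -/

import Mathlib

/-- Hermitian inner product on ℂ²: `⟨u,w⟩ = Σᵢ uᵢ conj(wᵢ)`. -/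
noncomputable def herm (u w : Fin 2 → ℂ) : ℂ :=
  ∑ i : Fin 2, u i * (starRingEnd ℂ) (w i)

/-- Hermitian norm on ℂ²: `|u| = √⟨u,u⟩`. -/
noncomputable def cnorm2 (u : Fin 2 → ℂ) : ℝ :=
  Real.sqrt (∑ i : Fin 2, Complex.normSq (u i))

/-- A coefficient vector is admissible if every entry has modulus at most 1. -/
def Admissible {n : ℕ} (α : Fin n → ℂ) : Prop :=
  ∀ j, ‖α j‖ ≤ 1

/-- A coefficient vector is optimal if it is admissible and maximizes the norm of the
resultant `Σⱼ αⱼ vⱼ` among all admissible coefficient vectors. -/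
def IsOptimal {n : ℕ} (v : Fin n → Fin 2 → ℂ) (α : Fin n → ℂ) : Prop :=
  Admissible α ∧ ∀ β : Fin n → ℂ, Admissible β →
    cnorm2 (∑ j, β j • v j) ≤ cnorm2 (∑ j, α j • v j)

/-!
Change a single coefficient of an optimal `α`: with `V` the resultant and `x = vⱼ`,
`‖V + c x‖² = ‖V‖² + 2 Re (c ⟨V, x⟩) + |c|² ‖x‖²`, so optimality rules out every admissible
change `c ≠ 0` with `Re (c ⟨V, x⟩) ≥ 0`. If `z = ⟨x, V⟩` vanished, both `β = 0` and `β = 1`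
would have to equal `αⱼ`. Otherwise `β = z / |z|` gives `Re ((β - αⱼ) z̄) = |z| - Re (αⱼ z̄) ≥ 0`,
hence `β = αⱼ`.
-/

theorem Finset.sum_update_smul_eq_add {ι R M : Type*} [Fintype ι] [DecidableEq ι] [Ring R]
    [AddCommGroup M] [Module R M] (α : ι → R) (v : ι → M) (j : ι) (β : R) :
    ∑ i, Function.update α j β i • v i = ∑ i, α i • v i + (β - α j) • v j := by
  rw [← Finset.add_sum_erase _ _ (Finset.mem_univ j),
    ← Finset.add_sum_erase _ _ (Finset.mem_univ j),
    Finset.sum_congr rfl fun i hi => by rw [Function.update_of_ne (Finset.ne_of_mem_erase hi)]]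
  simp only [Function.update_self, sub_smul]
  abel

open RCLike in
open scoped InnerProductSpace in
theorem eq_zero_of_norm_add_smul_le {𝕜 E : Type*} [RCLike 𝕜] [NormedAddCommGroup E]
    [InnerProductSpace 𝕜 E] {V x : E} {c : 𝕜} (hx : x ≠ 0) (hle : ‖V + c • x‖ ≤ ‖V‖)
    (hre : 0 ≤ re ⟪V, c • x⟫_𝕜) : c = 0 := by
  have hsq := norm_add_sq (𝕜 := 𝕜) V (c • x)
  have hle_sq : ‖V + c • x‖ ^ 2 ≤ ‖V‖ ^ 2 := pow_le_pow_left₀ (norm_nonneg _) hle 2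
  have hcx : ‖c • x‖ = 0 := by nlinarith [norm_nonneg (c • x)]
  simpa [hx] using hcx

open scoped InnerProductSpace ComplexConjugate in
theorem inner_ne_zero_and_eq_div_norm_of_forall_norm_add_smul_le {E : Type*}
    [NormedAddCommGroup E] [InnerProductSpace ℂ E] {V x : E} {α : ℂ} (hx : x ≠ 0)
    (hα : ‖α‖ ≤ 1) (hmax : ∀ β : ℂ, ‖β‖ ≤ 1 → ‖V + (β - α) • x‖ ≤ ‖V‖) :
    ⟪x, V⟫_ℂ ≠ 0 ∧ α = ⟪x, V⟫_ℂ / ‖⟪x, V⟫_ℂ‖ := by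
  set z := ⟪x, V⟫_ℂ
  have hinner (c : ℂ) : ⟪V, c • x⟫_ℂ = c * conj z := by
    rw [inner_smul_right, inner_conj_symm]
  have hz : z ≠ 0 := by
    intro hz
    have h₀ := eq_zero_of_norm_add_smul_le hx (hmax 0 (by simp)) (by simp [hinner, hz])
    have h₁ := eq_zero_of_norm_add_smul_le hx (hmax 1 (by simp)) (by simp [hinner, hz])
    exact one_ne_zero (by linear_combination h₁ - h₀)
  refine ⟨hz, (sub_eq_zero.mp (eq_zero_of_norm_add_smul_le hx (hmax _ ?_) ?_)).symm⟩
  · simp [hz]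
  · have hαz : (α * conj z).re ≤ ‖z‖ :=
      calc (α * conj z).re ≤ ‖α * conj z‖ := Complex.re_le_norm _
        _ ≤ ‖z‖ := by simpa using mul_le_of_le_one_left (norm_nonneg z) hα
    have hzz : (z / ‖z‖ * conj z).re = ‖z‖ := by
      rw [div_mul_eq_mul_div, Complex.mul_conj, Complex.normSq_eq_norm_sq]
      simp [hz, pow_two]
    rw [hinner, sub_mul, RCLike.re_to_complex, Complex.sub_re, hzz]
    linarith

open scoped InnerProductSpace in
theorem herm_eq_inner (u w : Fin 2 → ℂ) : herm u w = ⟪WithLp.toLp 2 w, WithLp.toLp 2 u⟫_ℂ := by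
  simp [herm, PiLp.inner_apply]

theorem cnorm2_eq_norm (u : Fin 2 → ℂ) : cnorm2 u = ‖WithLp.toLp 2 u‖ := by
  simp [cnorm2, EuclideanSpace.norm_eq, Complex.sq_norm]

theorem IsOptimal.norm_add_smul_le {n : ℕ} {v : Fin n → Fin 2 → ℂ} {α : Fin n → ℂ}
    (hα : IsOptimal v α) (j : Fin n) {β : ℂ} (hβ : ‖β‖ ≤ 1) :
    ‖WithLp.toLp 2 (∑ i, α i • v i) + (β - α j) • WithLp.toLp 2 (v j)‖ ≤
      ‖WithLp.toLp 2 (∑ i, α i • v i)‖ := by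
  have hadm : Admissible (Function.update α j β) :=
    (Function.forall_update_iff α fun _ b => ‖b‖ ≤ 1).2 ⟨hβ, fun i _ => hα.1 i⟩
  simpa only [Finset.sum_update_smul_eq_add, cnorm2_eq_norm, WithLp.toLp_add,
    WithLp.toLp_smul] using hα.2 _ hadm

theorem optimal_coefficients_fixed_point_general
    (n : ℕ) (v : Fin n → Fin 2 → ℂ) (hv : ∀ j, v j ≠ 0)
    (α : Fin n → ℂ) (hα : IsOptimal v α) :
    (∀ j, herm (∑ i, α i • v i) (v j) ≠ 0 ∧
      α j = herm (∑ i, α i • v i) (v j) /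
        ((‖herm (∑ i, α i • v i) (v j)‖ : ℝ) : ℂ)) ∧
    (∑ i, α i • v i) = ∑ j, (herm (∑ i, α i • v i) (v j) /
        ((‖herm (∑ i, α i • v i) (v j)‖ : ℝ) : ℂ)) • v j := by
  have key (j : Fin n) :
      herm (∑ i, α i • v i) (v j) ≠ 0 ∧
        α j = herm (∑ i, α i • v i) (v j) / ((‖herm (∑ i, α i • v i) (v j)‖ : ℝ) : ℂ) := by
    simpa only [herm_eq_inner] using
      inner_ne_zero_and_eq_div_norm_of_forall_norm_add_smul_le (by simpa using hv j) (hα.1 j)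
        fun _ hβ => hα.norm_add_smul_le j hβ
  exact ⟨key, Finset.sum_congr rfl fun j _ => congr_arg (· • v j) (key j).2⟩

/-- For an optimal coefficient vector `α` with resultant
`v_opt = Σⱼ αⱼ vⱼ`, each coefficient equals the normalized inner product
`αⱼ = ⟨v_opt, vⱼ⟩ / |⟨v_opt, vⱼ⟩|`, and `v_opt` satisfies the fixed-point equation
`v_opt = Σⱼ (⟨v_opt, vⱼ⟩ / |⟨v_opt, vⱼ⟩|) vⱼ`. -/
theorem optimal_coefficients_fixed_point
    (n : ℕ) (hn : 1 ≤ n) (v : Fin n → Fin 2 → ℂ) (hv : ∀ j, v j ≠ 0)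
    (α : Fin n → ℂ) (hα : IsOptimal v α) :
    (∀ j, herm (∑ i, α i • v i) (v j) ≠ 0 ∧
      α j = herm (∑ i, α i • v i) (v j) /
        ((‖herm (∑ i, α i • v i) (v j)‖ : ℝ) : ℂ)) ∧
    (∑ i, α i • v i) = ∑ j, (herm (∑ i, α i • v i) (v j) /
        ((‖herm (∑ i, α i • v i) (v j)‖ : ℝ) : ℂ)) • v j :=
  optimal_coefficients_fixed_point_general n v hv α hα
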